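/- Let A = F_{p^2}[a_0,b_0,...,a_p,b_p] and let 𝔞 be the ideal generated by the polynomials h_i = a_i^p λ_i^p + a_i λ_i - b_i^{p+1} λ_i^{p+1} (for 0 ≤ i ≤ p) together with all products a_i a_j, a_i b_j, b_i b_j for i ≠ j. Then the quotient ring A/𝔞 is reduced, provided each h_i is irreducible. -/

import Mathlib

open MvPolynomial

/-- The variable `aᵢ` in `A = 𝔽_{p²}[a₀,b₀,…,a_p,b_p]`: `a i = X (i, 0)`. -/
noncomputable def aVar (p : ℕ) [Fact p.Prime] (i : Fin (p + 1)) :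
    MvPolynomial (Fin (p + 1) × Fin 2) (GaloisField p 2) := X (i, 0)

/-- The variable `bᵢ`: `b i = X (i, 1)`. -/
noncomputable def bVar (p : ℕ) [Fact p.Prime] (i : Fin (p + 1)) :
    MvPolynomial (Fin (p + 1) × Fin 2) (GaloisField p 2) := X (i, 1)

/-- The polynomial `hᵢ = λᵢ^p aᵢ^p + λᵢ aᵢ - λᵢ^{p+1} bᵢ^{p+1}`. -/
noncomputable def hPoly (p : ℕ) [Fact p.Prime] (lam : Fin (p + 1) → GaloisField p 2)
    (i : Fin (p + 1)) : MvPolynomial (Fin (p + 1) × Fin 2) (GaloisField p 2) :=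
  C (lam i ^ p) * aVar p i ^ p + C (lam i) * aVar p i -
    C (lam i ^ (p + 1)) * bVar p i ^ (p + 1)

/-- The ideal `𝔞 = (hᵢ, aᵢaⱼ, aᵢbⱼ, bᵢbⱼ)_{i ≠ j}`. -/
noncomputable def aIdeal (p : ℕ) [Fact p.Prime] (lam : Fin (p + 1) → GaloisField p 2) :
    Ideal (MvPolynomial (Fin (p + 1) × Fin 2) (GaloisField p 2)) :=
  Ideal.span (Set.range (hPoly p lam) ∪
    {q | ∃ i j : Fin (p + 1), i ≠ j ∧
      (q = aVar p i * aVar p j ∨ q = aVar p i * bVar p j ∨ q = bVar p i * bVar p j)})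

/-! ### Auxiliary definitions -/

/-- The substitution `A → 𝔽_{p²}[x,y]` sending `a i ↦ x, b i ↦ y` and all variables with
index `≠ i` to `0`. -/
noncomputable def phiMap (p : ℕ) [Fact p.Prime] (i : Fin (p + 1)) :
    MvPolynomial (Fin (p + 1) × Fin 2) (GaloisField p 2) →ₐ[GaloisField p 2]
      MvPolynomial (Fin 2) (GaloisField p 2) :=
  aeval (fun v => if v.1 = i then X v.2 else 0)

/-- The inclusion `𝔽_{p²}[x,y] → A` sending `x ↦ a i, y ↦ b i`. -/
noncomputable def psiMap (p : ℕ) [Fact p.Prime] (i : Fin (p + 1)) :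
    MvPolynomial (Fin 2) (GaloisField p 2) →ₐ[GaloisField p 2]
      MvPolynomial (Fin (p + 1) × Fin 2) (GaloisField p 2) :=
  rename (fun k => (i, k))

/-- The two-variable model of `hPoly`. -/
noncomputable def HPoly (p : ℕ) [Fact p.Prime] (lam : Fin (p + 1) → GaloisField p 2)
    (i : Fin (p + 1)) : MvPolynomial (Fin 2) (GaloisField p 2) :=
  C (lam i ^ p) * X 0 ^ p + C (lam i) * X 0 - C (lam i ^ (p + 1)) * X 1 ^ (p + 1)

lemma psi_HPoly (p : ℕ) [Fact p.Prime] (lam : Fin (p + 1) → GaloisField p 2)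
    (i : Fin (p + 1)) : psiMap p i (HPoly p lam i) = hPoly p lam i := by
  simp [psiMap, HPoly, hPoly, aVar, bVar]

lemma phi_psi (p : ℕ) [Fact p.Prime] (i : Fin (p + 1))
    (g : MvPolynomial (Fin 2) (GaloisField p 2)) :
    phiMap p i (psiMap p i g) = g := by
  have : (phiMap p i).comp (psiMap p i) = AlgHom.id _ _ := by
    ext k
    simp [phiMap, psiMap]
  calc phiMap p i (psiMap p i g) = ((phiMap p i).comp (psiMap p i)) g := rfl
    _ = g := by rw [this]; rfl

lemma phi_hPoly_self (p : ℕ) [Fact p.Prime] (lam : Fin (p + 1) → GaloisField p 2)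
    (i : Fin (p + 1)) : phiMap p i (hPoly p lam i) = HPoly p lam i := by
  simp [phiMap, hPoly, HPoly, aVar, bVar]

lemma phi_hPoly_ne (p : ℕ) [Fact p.Prime] (lam : Fin (p + 1) → GaloisField p 2)
    {i j : Fin (p + 1)} (h : j ≠ i) : phiMap p i (hPoly p lam j) = 0 := by
  have hp0 : p ≠ 0 := (Fact.out : p.Prime).ne_zero
  simp [phiMap, hPoly, aVar, bVar, h, zero_pow, hp0]

lemma HPoly_irreducible (p : ℕ) [Fact p.Prime] (lam : Fin (p + 1) → GaloisField p 2)
    (i : Fin (p + 1)) (hirr : Irreducible (hPoly p lam i)) :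
    Irreducible (HPoly p lam i) := by
  constructor
  · intro hu
    exact hirr.not_isUnit (psi_HPoly p lam i ▸ hu.map (psiMap p i))
  · intro u v huv
    have h2 : hPoly p lam i = psiMap p i u * psiMap p i v := by
      rw [← psi_HPoly, huv, map_mul]
    rcases hirr.isUnit_or_isUnit h2 with h | h
    · left
      have := h.map (phiMap p i)
      rwa [phi_psi] at this
    · right
      have := h.map (phiMap p i)
      rwa [phi_psi] at this

/-- The prime ideal `Q i`. -/
noncomputable def QIdeal (p : ℕ) [Fact p.Prime] (lam : Fin (p + 1) → GaloisField p 2)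
    (i : Fin (p + 1)) : Ideal (MvPolynomial (Fin (p + 1) × Fin 2) (GaloisField p 2)) :=
  Ideal.comap (phiMap p i) (Ideal.span {HPoly p lam i})

lemma QIdeal_isPrime (p : ℕ) [Fact p.Prime] (lam : Fin (p + 1) → GaloisField p 2)
    (i : Fin (p + 1)) (hirr : Irreducible (hPoly p lam i)) :
    (QIdeal p lam i).IsPrime := by
  have hH := HPoly_irreducible p lam i hirr
  have hprime : Prime (HPoly p lam i) :=
    (UniqueFactorizationMonoid.irreducible_iff_prime).mp hH
  haveI : (Ideal.span {HPoly p lam i}).IsPrime :=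
    (Ideal.span_singleton_prime hH.ne_zero).mpr hprime
  exact Ideal.IsPrime.comap _

lemma aIdeal_le_QIdeal (p : ℕ) [Fact p.Prime] (lam : Fin (p + 1) → GaloisField p 2)
    (i : Fin (p + 1)) : aIdeal p lam ≤ QIdeal p lam i := by
  rw [aIdeal, Ideal.span_le]
  rintro q (⟨j, rfl⟩ | ⟨i', j', hne, hq⟩)
  · show phiMap p i (hPoly p lam j) ∈ Ideal.span {HPoly p lam i}
    rcases eq_or_ne j i with rfl | h
    · rw [phi_hPoly_self]
      exact Ideal.subset_span rfl
    · rw [phi_hPoly_ne p lam h]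
      exact zero_mem _
  · show phiMap p i q ∈ Ideal.span {HPoly p lam i}
    have key : ∀ s t : Fin 2,
        phiMap p i (X (i', s) * X (j', t) :
          MvPolynomial (Fin (p + 1) × Fin 2) (GaloisField p 2)) = 0 := by
      intro s t
      simp only [phiMap, map_mul, aeval_X]
      rcases eq_or_ne i' i with rfl | h1
      · simp [Ne.symm hne]
      · simp [h1]
    have hq0 : phiMap p i q = 0 := by
      rcases hq with rfl | rfl | rfl
      · exact key 0 0
      · exact key 0 1
      · exact key 1 1
    rw [hq0]; exact zero_mem _

/-- The combined projection `π i = ψ i ∘ φ i` as a single substitution. -/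
lemma psi_phi_eq_aeval (p : ℕ) [Fact p.Prime] (i : Fin (p + 1)) :
    (psiMap p i).comp (phiMap p i) =
      aeval (fun v : Fin (p + 1) × Fin 2 =>
        if v.1 = i then (X v : MvPolynomial (Fin (p + 1) × Fin 2) (GaloisField p 2)) else 0) := by
  apply MvPolynomial.algHom_ext
  rintro ⟨v1, v2⟩
  simp only [AlgHom.coe_comp, Function.comp_apply, phiMap, psiMap, aeval_X]
  by_cases h : v1 = i
  · subst h
    simp
  · simp [h]

/-- Key decomposition: modulo the mixed products, every polynomial equals the sum of its
single-index pieces. -/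
lemma key_decomp (p : ℕ) [Fact p.Prime]
    (f : MvPolynomial (Fin (p + 1) × Fin 2) (GaloisField p 2)) :
    f - ∑ i : Fin (p + 1), psiMap p i (phiMap p i f) ∈
      Ideal.span {q : MvPolynomial (Fin (p + 1) × Fin 2) (GaloisField p 2) |
        ∃ i j : Fin (p + 1), i ≠ j ∧
          (q = aVar p i * aVar p j ∨ q = aVar p i * bVar p j ∨ q = bVar p i * bVar p j)} := by
  set M := Ideal.span {q : MvPolynomial (Fin (p + 1) × Fin 2) (GaloisField p 2) |
        ∃ i j : Fin (p + 1), i ≠ j ∧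
          (q = aVar p i * aVar p j ∨ q = aVar p i * bVar p j ∨ q = bVar p i * bVar p j)} with hM
  induction f using MvPolynomial.induction_on' with
  | add f g hf hg =>
    have : (f + g) - ∑ i : Fin (p + 1), psiMap p i (phiMap p i (f + g)) =
        (f - ∑ i : Fin (p + 1), psiMap p i (phiMap p i f)) +
        (g - ∑ i : Fin (p + 1), psiMap p i (phiMap p i g)) := by
      simp only [map_add, Finset.sum_add_distrib]
      ring
    rw [this]
    exact add_mem hf hg
  | monomial d c =>
    by_cases hmix : ∃ v ∈ d.support, ∃ w ∈ d.support, v.1 ≠ w.1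
    · obtain ⟨v, hv, w, hw, hvw⟩ := hmix
      have hzero : ∀ j, phiMap p j (monomial d c) = 0 := by
        intro j
        have hu : ∃ u ∈ d.support, u.1 ≠ j := by
          rcases eq_or_ne v.1 j with h | h
          · exact ⟨w, hw, fun hw' => hvw (h.trans hw'.symm)⟩
          · exact ⟨v, hv, h⟩
        obtain ⟨u, hu, huj⟩ := hu
        rw [phiMap, aeval_monomial]
        have : (d.prod fun v n =>
            (if v.1 = j then (X v.2 : MvPolynomial (Fin 2) (GaloisField p 2)) else 0) ^ n) = 0 :=
          Finset.prod_eq_zero hu (by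
            show (if u.1 = j then (X u.2 : MvPolynomial (Fin 2) (GaloisField p 2)) else 0)
              ^ d u = 0
            rw [if_neg huj]
            exact zero_pow (Finsupp.mem_support_iff.mp hu))
        rw [this, mul_zero]
      have hsum : (∑ i : Fin (p + 1), psiMap p i (phiMap p i (monomial d c))) = 0 := by
        apply Finset.sum_eq_zero
        intro j _
        rw [hzero j, map_zero]
      rw [hsum, sub_zero]
      -- `monomial d c` is divisible by `X v * X w`
      have hne' : v ≠ w := fun h => hvw (by rw [h])
      have hle : Finsupp.single v 1 + Finsupp.single w 1 ≤ d := by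
        intro u
        rw [Finsupp.add_apply, Finsupp.single_apply, Finsupp.single_apply]
        rcases eq_or_ne v u with rfl | h1
        · rw [if_pos rfl, if_neg (fun h => hne' h.symm), add_zero]
          exact Nat.one_le_iff_ne_zero.mpr (Finsupp.mem_support_iff.mp hv)
        · rw [if_neg h1]
          rcases eq_or_ne w u with rfl | h2
          · rw [if_pos rfl, zero_add]
            exact Nat.one_le_iff_ne_zero.mpr (Finsupp.mem_support_iff.mp hw)
          · rw [if_neg h2]
            exact Nat.zero_le _
      have hfac : monomial d c =
          ((X v * X w : MvPolynomial (Fin (p + 1) × Fin 2) (GaloisField p 2))) *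
            monomial (d - (Finsupp.single v 1 + Finsupp.single w 1)) c := by
        rw [X, X, monomial_mul, monomial_mul, add_tsub_cancel_of_le hle, one_mul, one_mul]
      have hgen : (X v * X w : MvPolynomial (Fin (p + 1) × Fin 2) (GaloisField p 2)) ∈
          {q : MvPolynomial (Fin (p + 1) × Fin 2) (GaloisField p 2) |
            ∃ i j : Fin (p + 1), i ≠ j ∧
              (q = aVar p i * aVar p j ∨ q = aVar p i * bVar p j ∨
                q = bVar p i * bVar p j)} := by
        obtain ⟨i1, s⟩ := v
        obtain ⟨j1, t⟩ := w
        simp only [ne_eq] at hvw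
        fin_cases s <;> fin_cases t
        · exact ⟨i1, j1, hvw, Or.inl rfl⟩
        · exact ⟨i1, j1, hvw, Or.inr (Or.inl rfl)⟩
        · exact ⟨j1, i1, fun h => hvw h.symm, Or.inr (Or.inl (mul_comm _ _))⟩
        · exact ⟨i1, j1, hvw, Or.inr (Or.inr rfl)⟩
      rw [hfac]
      exact Ideal.mul_mem_right _ _ (Ideal.subset_span hgen)
    · push_neg at hmix
      by_cases hd : d = 0
      · subst hd
        have hφ : ∀ j : Fin (p + 1), psiMap p j (phiMap p j (monomial 0 c)) =
            (monomial 0 c : MvPolynomial (Fin (p + 1) × Fin 2) (GaloisField p 2)) := by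
          intro j
          rw [monomial_zero']
          simp [phiMap, psiMap, algebraMap_eq]
        have hsum : (∑ i : Fin (p + 1), psiMap p i (phiMap p i (monomial 0 c))) =
            (p + 1 : ℕ) • (monomial 0 c : MvPolynomial (Fin (p + 1) × Fin 2) (GaloisField p 2)) := by
          rw [Finset.sum_congr rfl fun i _ => hφ i, Finset.sum_const, Finset.card_univ,
            Fintype.card_fin]
        rw [hsum]
        have hchar : ((p : ℕ) : MvPolynomial (Fin (p + 1) × Fin 2) (GaloisField p 2)) = 0 :=
          CharP.cast_eq_zero _ p
        have : ((p + 1 : ℕ) : MvPolynomial (Fin (p + 1) × Fin 2) (GaloisField p 2)) = 1 := by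
          push_cast
          rw [hchar, zero_add]
        rw [nsmul_eq_mul, this, one_mul, sub_self]
        exact zero_mem _
      · obtain ⟨v0, hv0⟩ := Finsupp.support_nonempty_iff.mpr hd
        have hall : ∀ v ∈ d.support, v.1 = v0.1 := fun v hv => hmix v hv v0 hv0
        have hzero : ∀ j, j ≠ v0.1 → phiMap p j (monomial d c) = 0 := by
          intro j hj
          rw [phiMap, aeval_monomial]
          have : (d.prod fun v n =>
              (if v.1 = j then (X v.2 : MvPolynomial (Fin 2) (GaloisField p 2)) else 0) ^ n) = 0 :=
            Finset.prod_eq_zero hv0 (by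
              show (if v0.1 = j then (X v0.2 : MvPolynomial (Fin 2) (GaloisField p 2)) else 0)
                ^ d v0 = 0
              rw [if_neg (fun h => hj h.symm)]
              exact zero_pow (Finsupp.mem_support_iff.mp hv0))
          rw [this, mul_zero]
        have hself : psiMap p v0.1 (phiMap p v0.1 (monomial d c)) = monomial d c := by
          have := congrArg (fun F => F (monomial d c)) (psi_phi_eq_aeval p v0.1)
          simp only [AlgHom.coe_comp, Function.comp_apply] at this
          rw [this, aeval_monomial, monomial_eq, algebraMap_eq]
          congr 1
          apply Finset.prod_congr rfl
          intro v hv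
          show (if v.1 = v0.1 then (X v : MvPolynomial (Fin (p + 1) × Fin 2) (GaloisField p 2))
            else 0) ^ d v = X v ^ d v
          rw [if_pos (hall v hv)]
        have hsum : (∑ i : Fin (p + 1), psiMap p i (phiMap p i (monomial d c))) =
            monomial d c := by
          rw [Finset.sum_eq_single_of_mem v0.1 (Finset.mem_univ _)
            (fun j _ hj => by rw [hzero j hj, map_zero])]
          exact hself
        rw [hsum, sub_self]
        exact zero_mem _

lemma mem_aIdeal_of_forall_Q (p : ℕ) [Fact p.Prime] (lam : Fin (p + 1) → GaloisField p 2)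
    (f : MvPolynomial (Fin (p + 1) × Fin 2) (GaloisField p 2))
    (hf : ∀ i, f ∈ QIdeal p lam i) : f ∈ aIdeal p lam := by
  have hM : Ideal.span {q : MvPolynomial (Fin (p + 1) × Fin 2) (GaloisField p 2) |
        ∃ i j : Fin (p + 1), i ≠ j ∧
          (q = aVar p i * aVar p j ∨ q = aVar p i * bVar p j ∨ q = bVar p i * bVar p j)} ≤
      aIdeal p lam := by
    rw [aIdeal]
    exact Ideal.span_mono Set.subset_union_right
  have h1 : f - ∑ i : Fin (p + 1), psiMap p i (phiMap p i f) ∈ aIdeal p lam :=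
    hM (key_decomp p f)
  have h2 : ∀ i : Fin (p + 1), psiMap p i (phiMap p i f) ∈ aIdeal p lam := by
    intro i
    have hfi : phiMap p i f ∈ Ideal.span {HPoly p lam i} := hf i
    obtain ⟨g, hg⟩ := Ideal.mem_span_singleton'.mp hfi
    have : psiMap p i (phiMap p i f) = psiMap p i g * hPoly p lam i := by
      rw [← hg, map_mul, psi_HPoly]
    rw [this]
    exact Ideal.mul_mem_left _ _ (Ideal.subset_span (Or.inl ⟨i, rfl⟩))
  have : f = (f - ∑ i : Fin (p + 1), psiMap p i (phiMap p i f)) +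
      ∑ i : Fin (p + 1), psiMap p i (phiMap p i f) := by ring
  rw [this]
  exact add_mem h1 (Ideal.sum_mem _ fun i _ => h2 i)

/-- If each `hᵢ` is irreducible, the quotient `A/𝔞` is reduced. -/
theorem quotient_by_aIdeal_isReduced (p : ℕ) [Fact p.Prime] (hp : Odd p)
    (lam : Fin (p + 1) → GaloisField p 2) (hlam : ∀ i, lam i ≠ 0)
    (hirr : ∀ i, Irreducible (hPoly p lam i)) :
    IsReduced (MvPolynomial (Fin (p + 1) × Fin 2) (GaloisField p 2) ⧸ aIdeal p lam) := by
  constructor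
  rintro x ⟨n, hn⟩
  obtain ⟨f, rfl⟩ := Ideal.Quotient.mk_surjective x
  rw [← map_pow, Ideal.Quotient.eq_zero_iff_mem] at hn
  rw [Ideal.Quotient.eq_zero_iff_mem]
  rcases Nat.eq_zero_or_pos n with rfl | hn0
  · rw [pow_zero] at hn
    have : aIdeal p lam = ⊤ := (Ideal.eq_top_iff_one _).mpr hn
    rw [this]
    exact Submodule.mem_top
  · apply mem_aIdeal_of_forall_Q
    intro i
    haveI := QIdeal_isPrime p lam i (hirr i)
    have hpow : f ^ n ∈ QIdeal p lam i := aIdeal_le_QIdeal p lam i hn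
    exact (QIdeal_isPrime p lam i (hirr i)).mem_of_pow_mem n hpow
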